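/- arXiv:2602.07671 — 2 statements merged into one kernel-verified Lean document; each statement's English description precedes it below -/
import Mathlib

section
/- Let μ₁, μ₂ ∈ ℝⁿ and let Σ₁, Σ₂ be commuting symmetric positive definite matrices with spectra in [λ_min, λ_max], 0 < λ_min ≤ λ_max. Define Δ² := ‖μ₁−μ₂‖₂² + ‖Σ₁−Σ₂‖_F² and W₂² := ‖μ₁−μ₂‖₂² + ‖Σ₁^{1/2} − Σ₂^{1/2}‖_F². Then c₋² Δ² ≤ W₂² ≤ c₊² Δ², where c₋ = min(1, (2√λ_max)^{-1}) and c₊ = max(1, (2√λ_min)^{-1}). -/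
/-!
Write `Tᵢ = Σᵢ^{1/2}`. As functions of commuting matrices, `T₁` and `T₂` commute, so
`Σ₁ - Σ₂ = (T₁ + T₂)(T₁ - T₂)` and `‖Σ₁ - Σ₂‖_F² = tr((T₁ - T₂)ᴴ (T₁ + T₂)² (T₁ - T₂))`.
The spectral bounds give `2√λ_min ≤ T₁ + T₂ ≤ 2√λ_max`, hence `4λ_min ≤ (T₁ + T₂)² ≤ 4λ_max`
in the Loewner order, and therefore
`4λ_min ‖T₁ - T₂‖_F² ≤ ‖Σ₁ - Σ₂‖_F² ≤ 4λ_max ‖T₁ - T₂‖_F²`.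
The mean terms are the same on both sides.
-/

open Matrix

open scoped ComplexOrder in
/-- The positive semidefinite square root of a positive semidefinite matrix, as defined in the
older Mathlib (`Matrix.PosSemidef.sqrt`, since removed). -/
noncomputable def Matrix.PosSemidef.sqrt {n 𝕜 : Type*} [Fintype n] [RCLike 𝕜] [DecidableEq n]
    {A : Matrix n n 𝕜} (hA : A.PosSemidef) : Matrix n n 𝕜 :=
  (hA.1.eigenvectorUnitary : Matrix n n 𝕜) * diagonal ((↑) ∘ (√·) ∘ hA.1.eigenvalues) *
    (star hA.1.eigenvectorUnitary : Matrix n n 𝕜)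

/-- Squared Frobenius norm of a real matrix. -/
noncomputable def frobSq {n : ℕ} (A : Matrix (Fin n) (Fin n) ℝ) : ℝ :=
  ∑ i, ∑ j, (A i j) ^ 2

open scoped MatrixOrder ComplexOrder

namespace Matrix.PosSemidef

variable {n 𝕜 : Type*} [Fintype n] [RCLike 𝕜] [DecidableEq n] {A : Matrix n n 𝕜}

theorem sqrt_eq_cfc (hA : A.PosSemidef) : hA.sqrt = cfc Real.sqrt A := by
  rw [hA.1.cfc_eq, IsHermitian.cfc, Unitary.conjStarAlgAut_apply]
  rfl

theorem sqrt_mul_self (hA : A.PosSemidef) : hA.sqrt * hA.sqrt = A := by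
  have hspec : ∀ x ∈ spectrum ℝ A, √x * √x = x :=
    fun _ hx ↦ Real.mul_self_sqrt (spectrum_nonneg_of_nonneg (nonneg_iff_posSemidef.mpr hA) hx)
  rw [sqrt_eq_cfc, ← cfc_mul Real.sqrt Real.sqrt A, cfc_congr hspec, cfc_id' ℝ A]

theorem isHermitian_sqrt (hA : A.PosSemidef) : hA.sqrt.IsHermitian := by
  rw [sqrt_eq_cfc]
  exact cfc_predicate _ _

theorem commute_sqrt {B : Matrix n n 𝕜} (hA : A.PosSemidef) (h : Commute A B) :
    Commute hA.sqrt B := by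
  rw [sqrt_eq_cfc]
  exact h.cfc_real _

theorem sqrt_mem_Icc {r s : ℝ} (hA : A.PosSemidef) (h : ∀ i, hA.1.eigenvalues i ∈ Set.Icc r s) :
    hA.sqrt ∈ Set.Icc (algebraMap ℝ _ √r) (algebraMap ℝ _ √s) := by
  have hspec : ∀ x ∈ spectrum ℝ A, x ∈ Set.Icc r s := by
    rw [hA.1.spectrum_real_eq_range_eigenvalues, Set.forall_mem_range]
    exact h
  rw [sqrt_eq_cfc]
  exact ⟨algebraMap_le_cfc _ _ _ fun x hx ↦ Real.sqrt_le_sqrt (hspec x hx).1,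
    cfc_le_algebraMap _ _ _ fun x hx ↦ Real.sqrt_le_sqrt (hspec x hx).2⟩

end Matrix.PosSemidef

theorem sq_mem_Icc_algebraMap {A : Type*} [Ring A] [StarRing A] [Algebra ℝ A] [TopologicalSpace A]
    [PartialOrder A] [StarOrderedRing A] [ContinuousFunctionalCalculus ℝ A IsSelfAdjoint]
    [NonnegSpectrumClass ℝ A] {a : A} {r s : ℝ} (ha : IsSelfAdjoint a) (hr : 0 ≤ r)
    (h : a ∈ Set.Icc (algebraMap ℝ A r) (algebraMap ℝ A s)) :
    a ^ 2 ∈ Set.Icc (algebraMap ℝ A (r ^ 2)) (algebraMap ℝ A (s ^ 2)) := by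
  rw [Set.mem_Icc, algebraMap_le_iff_le_spectrum, le_algebraMap_iff_spectrum_le] at h
  rw [← cfc_pow_id (R := ℝ) a 2]
  exact ⟨algebraMap_le_cfc _ _ _ fun x hx ↦ pow_le_pow_left₀ hr (h.1 x hx) 2,
    cfc_le_algebraMap _ _ _ fun x hx ↦ pow_le_pow_left₀ (hr.trans (h.1 x hx)) (h.2 x hx) 2⟩

theorem Matrix.trace_star_mul_mul_mono {m 𝕜 : Type*} [Fintype m] [RCLike 𝕜]
    {X Y : Matrix m m 𝕜} (h : X ≤ Y) (A : Matrix m m 𝕜) :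
    (star A * X * A).trace ≤ (star A * Y * A).trace :=
  OrderHomClass.mono (tracePositiveLinearMap m ℝ 𝕜) (star_left_conjugate_le_conjugate h A)

section frobSq

variable {n : ℕ}

theorem frobSq_eq_trace (M : Matrix (Fin n) (Fin n) ℝ) : frobSq M = (star M * M).trace := by
  simp only [frobSq, trace, diag, mul_apply, star_eq_conjTranspose, conjTranspose_apply,
    star_trivial, ← sq]
  exact Finset.sum_comm

theorem frobSq_nonneg (M : Matrix (Fin n) (Fin n) ℝ) : 0 ≤ frobSq M := by
  unfold frobSq
  positivity

theorem frobSq_mul_eq_trace (B A : Matrix (Fin n) (Fin n) ℝ) :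
    frobSq (B * A) = (star A * (star B * B) * A).trace := by
  rw [frobSq_eq_trace, star_mul]
  noncomm_ring

theorem mul_frobSq_eq_trace (c : ℝ) (A : Matrix (Fin n) (Fin n) ℝ) :
    c * frobSq A = (star A * algebraMap ℝ _ c * A).trace := by
  rw [frobSq_eq_trace, Algebra.algebraMap_eq_smul_one, mul_smul_one, smul_mul, trace_smul,
    smul_eq_mul]

theorem mul_frobSq_le_frobSq_mul {B : Matrix (Fin n) (Fin n) ℝ} {c : ℝ}
    (h : algebraMap ℝ _ c ≤ star B * B) (A : Matrix (Fin n) (Fin n) ℝ) :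
    c * frobSq A ≤ frobSq (B * A) := by
  rw [mul_frobSq_eq_trace, frobSq_mul_eq_trace]
  exact trace_star_mul_mul_mono h A

theorem frobSq_mul_le_mul_frobSq {B : Matrix (Fin n) (Fin n) ℝ} {c : ℝ}
    (h : star B * B ≤ algebraMap ℝ _ c) (A : Matrix (Fin n) (Fin n) ℝ) :
    frobSq (B * A) ≤ c * frobSq A := by
  rw [mul_frobSq_eq_trace, frobSq_mul_eq_trace]
  exact trace_star_mul_mul_mono h A

end frobSq

theorem min_one_inv_sq_mul_le {d s w k : ℝ} (hd : 0 ≤ d) (hw : 0 ≤ w) (hk : 0 ≤ k)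
    (hs : s ≤ k ^ 2 * w) : min 1 k⁻¹ ^ 2 * (d + s) ≤ d + w := by
  set c := min 1 k⁻¹
  have hc0 : 0 ≤ c := le_min zero_le_one (inv_nonneg.mpr hk)
  have hck : c * k ≤ 1 := by
    rcases hk.eq_or_lt with rfl | hk
    · simp
    · exact (le_div_iff₀ hk).mp ((min_le_right _ _).trans (one_div k).ge)
  have hc2 : c ^ 2 ≤ 1 := pow_le_one₀ hc0 (min_le_left _ _)
  have hck2 : c ^ 2 * k ^ 2 ≤ 1 := by
    rw [← mul_pow]
    exact pow_le_one₀ (by positivity) hck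
  nlinarith [mul_le_mul_of_nonneg_left hs (sq_nonneg c)]

theorem le_max_one_inv_sq_mul {d s w k : ℝ} (hd : 0 ≤ d) (hw : 0 ≤ w) (hk : 0 < k)
    (hs : k ^ 2 * w ≤ s) : d + w ≤ max 1 k⁻¹ ^ 2 * (d + s) := by
  set C := max 1 k⁻¹
  have hC2 : 1 ≤ C ^ 2 := one_le_pow₀ (le_max_left _ _)
  have hCk2 : 1 ≤ C ^ 2 * k ^ 2 := by
    rw [← mul_pow]
    exact one_le_pow₀ ((div_le_iff₀ hk).mp ((one_div k).trans_le (le_max_right _ _)))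
  nlinarith [mul_le_mul_of_nonneg_left hs (sq_nonneg C), mul_nonneg (sq_nonneg k) hw]

theorem wasserstein_profile_biLipschitz_general {n : ℕ}
    (μ₁ μ₂ : EuclideanSpace ℝ (Fin n)) {S₁ S₂ : Matrix (Fin n) (Fin n) ℝ}
    {lmin lmax : ℝ}
    (hS₁ : S₁.PosDef) (hS₂ : S₂.PosDef)
    (hcomm : S₁ * S₂ = S₂ * S₁)
    (h0 : 0 < lmin)
    (hev₁ : ∀ i, hS₁.1.eigenvalues i ∈ Set.Icc lmin lmax)
    (hev₂ : ∀ i, hS₂.1.eigenvalues i ∈ Set.Icc lmin lmax) :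
    (min 1 (2 * Real.sqrt lmax)⁻¹) ^ 2 * (‖μ₁ - μ₂‖ ^ 2 + frobSq (S₁ - S₂))
      ≤ ‖μ₁ - μ₂‖ ^ 2 + frobSq (hS₁.posSemidef.sqrt - hS₂.posSemidef.sqrt) ∧
    ‖μ₁ - μ₂‖ ^ 2 + frobSq (hS₁.posSemidef.sqrt - hS₂.posSemidef.sqrt)
      ≤ (max 1 (2 * Real.sqrt lmin)⁻¹) ^ 2 * (‖μ₁ - μ₂‖ ^ 2 + frobSq (S₁ - S₂)) := by
  set T₁ := hS₁.posSemidef.sqrt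
  set T₂ := hS₂.posSemidef.sqrt
  have hT : Commute T₁ T₂ :=
    (hS₂.posSemidef.commute_sqrt (hS₁.posSemidef.commute_sqrt hcomm).symm).symm
  have hdiff : S₁ - S₂ = (T₁ + T₂) * (T₁ - T₂) := by
    rw [← hT.mul_self_sub_mul_self_eq, hS₁.posSemidef.sqrt_mul_self,
      hS₂.posSemidef.sqrt_mul_self]
  have hB : IsSelfAdjoint (T₁ + T₂) :=
    hS₁.posSemidef.isHermitian_sqrt.add hS₂.posSemidef.isHermitian_sqrt
  obtain ⟨hT₁lo, hT₁hi⟩ := hS₁.posSemidef.sqrt_mem_Icc hev₁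
  obtain ⟨hT₂lo, hT₂hi⟩ := hS₂.posSemidef.sqrt_mem_Icc hev₂
  have hBsq : star (T₁ + T₂) * (T₁ + T₂) ∈
      Set.Icc (algebraMap ℝ _ ((2 * √lmin) ^ 2)) (algebraMap ℝ _ ((2 * √lmax) ^ 2)) := by
    rw [hB.star_eq, ← sq]
    refine sq_mem_Icc_algebraMap hB (by positivity) ⟨?_, ?_⟩ <;>
      rw [two_mul, map_add] <;> gcongr
  rw [hdiff]
  exact ⟨min_one_inv_sq_mul_le (sq_nonneg _) (frobSq_nonneg _) (by positivity)
      (frobSq_mul_le_mul_frobSq hBsq.2 _),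
    le_max_one_inv_sq_mul (sq_nonneg _) (frobSq_nonneg _) (by positivity)
      (mul_frobSq_le_frobSq_mul hBsq.1 _)⟩

/-- Bi-Lipschitz equivalence of the profile distance `Δ` and the 2-Wasserstein
distance `W₂` between Gaussians with commuting covariances with spectra in
`[λ_min, λ_max]`. -/
theorem wasserstein_profile_biLipschitz {n : ℕ}
    (μ₁ μ₂ : EuclideanSpace ℝ (Fin n)) {S₁ S₂ : Matrix (Fin n) (Fin n) ℝ}
    {lmin lmax : ℝ}
    (hS₁ : S₁.PosDef) (hS₂ : S₂.PosDef)
    (hcomm : S₁ * S₂ = S₂ * S₁)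
    (h0 : 0 < lmin) (hle : lmin ≤ lmax)
    (hev₁ : ∀ i, hS₁.1.eigenvalues i ∈ Set.Icc lmin lmax)
    (hev₂ : ∀ i, hS₂.1.eigenvalues i ∈ Set.Icc lmin lmax) :
    (min 1 (2 * Real.sqrt lmax)⁻¹) ^ 2 * (‖μ₁ - μ₂‖ ^ 2 + frobSq (S₁ - S₂))
      ≤ ‖μ₁ - μ₂‖ ^ 2 + frobSq (hS₁.posSemidef.sqrt - hS₂.posSemidef.sqrt) ∧
    ‖μ₁ - μ₂‖ ^ 2 + frobSq (hS₁.posSemidef.sqrt - hS₂.posSemidef.sqrt)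
      ≤ (max 1 (2 * Real.sqrt lmin)⁻¹) ^ 2 * (‖μ₁ - μ₂‖ ^ 2 + frobSq (S₁ - S₂)) :=
  wasserstein_profile_biLipschitz_general μ₁ μ₂ hS₁ hS₂ hcomm h0 hev₁ hev₂
end

section
/- The one-dimensional Laplace mechanism is ε-differentially private: for a function f with |f(D) − f(D')| ≤ Δ for neighbouring inputs, releasing f(D) + η with η ∼ Laplace(0, Δ/ε) satisfies, for every measurable S ⊆ ℝ, Pr[f(D) + η ∈ S] ≤ e^ε · Pr[f(D') + η ∈ S]. -/
open MeasureTheory Set Real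

noncomputable def laplaceDensity (μ b x : ℝ) : ℝ :=
  1 / (2 * b) * exp (-|x - μ| / b)

theorem laplaceDensity_nonneg (μ : ℝ) {b : ℝ} (hb : 0 ≤ b) (x : ℝ) : 0 ≤ laplaceDensity μ b x := by
  unfold laplaceDensity
  positivity

theorem integrable_exp_neg_abs : Integrable fun x : ℝ => exp (-|x|) := by
  rw [← integrableOn_univ, ← Iic_union_Ioi (a := 0)]
  refine IntegrableOn.union ?_ ?_
  · refine (integrableOn_exp_Iic 0).congr_fun (fun x hx => ?_) measurableSet_Iic
    rw [abs_of_nonpos hx, neg_neg]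
  · refine (integrableOn_exp_neg_Ioi 0).congr_fun (fun x hx => ?_) measurableSet_Ioi
    rw [abs_of_pos hx]

theorem integrable_laplaceDensity (μ : ℝ) {b : ℝ} (hb : 0 < b) :
    Integrable (laplaceDensity μ b) := by
  refine ((integrable_exp_neg_abs.comp_div hb.ne').comp_sub_right μ).const_mul (1 / (2 * b))
    |>.congr (Filter.Eventually.of_forall fun x => ?_)
  simp only [laplaceDensity, abs_div, abs_of_pos hb, neg_div]

theorem laplaceDensity_le_exp_mul (μ μ' : ℝ) {b : ℝ} (hb : 0 ≤ b) (x : ℝ) :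
    laplaceDensity μ b x ≤ exp (|μ - μ'| / b) * laplaceDensity μ' b x := by
  rw [laplaceDensity, laplaceDensity, mul_left_comm, ← exp_add, ← add_div]
  gcongr
  linarith [abs_sub_le x μ μ']

/-- One-dimensional Laplace mechanism is `ε`-differentially private: if the
outputs on neighbouring datasets differ by at most `Δ` and the noise scale is
`b = Δ/ε`, then for every measurable set `S`, the probability (computed from
the shifted Laplace density) satisfies the `e^ε` ratio bound. -/
theorem laplace_mechanism_dp (ε Δ : ℝ) (hε : 0 < ε) (hΔ : 0 < Δ)
    (a a' : ℝ) (hsens : |a - a'| ≤ Δ) :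
    ∀ S : Set ℝ, MeasurableSet S →
      (∫ x in S, (1 / (2 * (Δ / ε))) * Real.exp (-|x - a| / (Δ / ε))) ≤
        Real.exp ε * ∫ x in S, (1 / (2 * (Δ / ε))) * Real.exp (-|x - a'| / (Δ / ε)) := by
  intro S _
  have hb : 0 < Δ / ε := div_pos hΔ hε
  have hratio : |a - a'| / (Δ / ε) ≤ ε := by
    rwa [div_le_iff₀ hb, mul_div_cancel₀ Δ hε.ne']
  change ∫ x in S, laplaceDensity a (Δ / ε) x ≤ exp ε * ∫ x in S, laplaceDensity a' (Δ / ε) x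
  rw [← integral_const_mul]
  refine setIntegral_mono (integrable_laplaceDensity a hb).integrableOn
    ((integrable_laplaceDensity a' hb).integrableOn.const_mul _) fun x => ?_
  calc laplaceDensity a (Δ / ε) x
      ≤ exp (|a - a'| / (Δ / ε)) * laplaceDensity a' (Δ / ε) x :=
        laplaceDensity_le_exp_mul a a' hb.le x
    _ ≤ exp ε * laplaceDensity a' (Δ / ε) x := by
        gcongr
        exact laplaceDensity_nonneg a' hb.le x
end
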